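/- Let L₁,₁ be the 4-dimensional complex ω-Lie algebra with ordered basis (e,x,y,z) defined by the nonzero brackets [e,y] = −e, [x,y] = y, [y,z] = z and the bilinear form determined by ω(x,y) = 1 (all other values of ω on basis pairs are 0). For any a,d,r,s ∈ ℂ and any b ∈ ℂ with b ≠ 0, the linear operator R on L₁,₁ defined by R(e) = a·e − b·z, R(x) = −(ad/b)·e + d·z, R(y) = r·e + s·z, R(z) = (a²/b)·e − a·z is a Rota-Baxter operator of weight 0 on L₁,₁. -/
import Mathlib


/-- The bracket of the 4-dimensional complex ω-Lie algebra `L₁,₁`, with ordered basis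
`(e, x, y, z) = (e₀, e₁, e₂, e₃)`, determined by the nonzero brackets
`[e,y] = −e`, `[x,y] = y`, `[y,z] = z`. -/
def L11bracket (u v : Fin 4 → ℂ) : Fin 4 → ℂ :=
  ![-(u 0 * v 2 - u 2 * v 0), 0, u 1 * v 2 - u 2 * v 1, u 2 * v 3 - u 3 * v 2]

/-- The form `ω` of `L₁,₁`, determined by `ω(x,y) = 1` (all other basis values 0). -/
def L11omega (u v : Fin 4 → ℂ) : ℂ := u 1 * v 2 - u 2 * v 1

/-- For any `a, d, r, s ∈ ℂ` and `b ≠ 0`, the linear operator `R` on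
`L₁,₁` given by `R(e) = a·e − b·z`, `R(x) = −(ad/b)·e + d·z`, `R(y) = r·e + s·z`,
`R(z) = (a²/b)·e − a·z` is a Rota-Baxter operator of weight 0. -/
theorem rotaBaxter_weight_zero_on_L11
    (a d r s b : ℂ) (hb : b ≠ 0)
    (R : (Fin 4 → ℂ) →ₗ[ℂ] (Fin 4 → ℂ))
    (hRe : R (Pi.single 0 1) = ![a, 0, 0, -b])
    (hRx : R (Pi.single 1 1) = ![-(a * d / b), 0, 0, d])
    (hRy : R (Pi.single 2 1) = ![r, 0, 0, s])
    (hRz : R (Pi.single 3 1) = ![a ^ 2 / b, 0, 0, -a]) :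
    ∀ u v, L11bracket (R u) (R v) = R (L11bracket (R u) v + L11bracket u (R v)) := by
  have hR : ∀ w : Fin 4 → ℂ, R w =
      ![a * w 0 - a * d / b * w 1 + r * w 2 + a ^ 2 / b * w 3, 0, 0,
        -b * w 0 + d * w 1 + s * w 2 - a * w 3] := by
    intro w
    have hw : w = w 0 • (Pi.single 0 1 : Fin 4 → ℂ) + w 1 • (Pi.single 1 1 : Fin 4 → ℂ) + w 2 • (Pi.single 2 1 : Fin 4 → ℂ) +
        w 3 • (Pi.single 3 1 : Fin 4 → ℂ) := by
      funext i; fin_cases i <;> simp [Pi.single_apply]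
    rw [hw, map_add, map_add, map_add, map_smul, map_smul, map_smul, map_smul,
      hRe, hRx, hRy, hRz]
    funext i; fin_cases i <;> simp <;> ring
  intro u v
  rw [hR u, hR v]
  rw [show L11bracket (![a * u 0 - a * d / b * u 1 + r * u 2 + a ^ 2 / b * u 3, 0, 0,
        -b * u 0 + d * u 1 + s * u 2 - a * u 3]) v
      + L11bracket u (![a * v 0 - a * d / b * v 1 + r * v 2 + a ^ 2 / b * v 3, 0, 0,
        -b * v 0 + d * v 1 + s * v 2 - a * v 3]) =
      ![-((a * u 0 - a * d / b * u 1 + r * u 2 + a ^ 2 / b * u 3) * v 2)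
        + u 2 * (a * v 0 - a * d / b * v 1 + r * v 2 + a ^ 2 / b * v 3), 0, 0,
        -((-b * u 0 + d * u 1 + s * u 2 - a * u 3) * v 2)
        + u 2 * (-b * v 0 + d * v 1 + s * v 2 - a * v 3)] from by
    funext i; fin_cases i <;> simp [L11bracket] <;> ring]
  rw [hR]
  funext i; fin_cases i <;> simp [L11bracket] <;> field_simp <;> ring
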